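/- arXiv:0712.3177 — 3 statements merged into one kernel-verified Lean document; each statement's English description precedes it below -/
import Mathlib

section
/- For every w ≥ 1, the inclusion of C_w^w into C_w is a quasi-isomorphism: it induces an isomorphism on cohomology in every degree. -/
/-!
The subcomplex `C_w^w` is a deformation retract of `C_w`. Write `x = Σ_v (a_v + q b_v)` and let
`t_v = Σ_{u ≤ v} κ^{v-u} a_u` be the telescoping sums of its q-free parts. The retraction keeps
`r x = t_w` in the top weight, the homotopy is `h x = Σ_{v < w} ± q t_v`, and since `κ` commutes
with `δ`, the telescoping sums of the q-free parts of `μ¹ x` are `± (δ t_v + b_v)`. This makes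
`r` a chain map with `r = id` on `C_w^w`, and `x = r x + μ¹ (h x) + h (μ¹ x)` for `x ∈ C_w`.
-/

open DirectSum

variable (K : Type) [Field K]
variable (A : ℕ → ℤ → Type) [∀ i n, AddCommGroup (A i n)] [∀ i n, Module K (A i n)]

/-- We fix once and for all the (defeq) additive structure used on the pairs
(q-free part, q-part), to keep instance paths uniform. -/
@[reducible] instance (priority := high) (n m : ℤ) (i : ℕ) :
    AddCommMonoid (A i n × A i m) :=
  AddCommGroup.toAddCommMonoid

/-- The degree-`n` part of the telescope complex: the direct sum over all
weights of (q-free part in degree `n`) × (q-part, of the form `q·b` with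
`b` in degree `n+1`). -/
abbrev TelescopeCW (n : ℤ) : Type := ⨁ i : ℕ, (A i n × A i (n + 1))

/-- The telescope differential
`μ¹(a + q b) = (−1)^{deg a} δ a + (−1)^{deg b} (q δ b + κ b − b)`. -/
noncomputable def telescopeMu1
    (δ : ∀ i n, A i n →ₗ[K] A i (n + 1))
    (κ : ∀ i n, A i n →ₗ[K] A (i + 1) n) (n : ℤ) :
    TelescopeCW A n →ₗ[K] TelescopeCW A (n + 1) :=
  DirectSum.toModule K ℕ (TelescopeCW A (n + 1)) fun i =>
    ((DirectSum.lof K ℕ (fun j => A j (n + 1) × A j (n + 1 + 1)) i).comp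
        (LinearMap.prod
          (((-1 : K) ^ n) •
            ((δ i n).comp (LinearMap.fst K (A i n) (A i (n + 1))) +
              LinearMap.snd K (A i n) (A i (n + 1))))
          (((-1 : K) ^ (n + 1)) •
            ((δ i (n + 1)).comp (LinearMap.snd K (A i n) (A i (n + 1)))))))
      +
    ((DirectSum.lof K ℕ (fun j => A j (n + 1) × A j (n + 1 + 1)) (i + 1)).comp
        (LinearMap.prod
          (((-1 : K) ^ (n + 1)) •
            ((κ i (n + 1)).comp (LinearMap.snd K (A i n) (A i (n + 1)))))
          (0 : (A i n × A i (n + 1)) →ₗ[K] A (i + 1) (n + 1 + 1))))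

lemma DirectSum.lof_apply_of_ne {R ι : Type*} [Semiring R] [DecidableEq ι] {M : ι → Type*}
    [∀ i, AddCommMonoid (M i)] [∀ i, Module R (M i)] {i j : ι} (h : j ≠ i) (b : M i) :
    lof R ι M i b j = 0 := by
  rw [lof_eq_of, of_eq_of_ne _ _ _ h]

lemma neg_one_zpow_add_one {R : Type*} [DivisionRing R] (n : ℤ) :
    (-1 : R) ^ (n + 1) = -(-1 : R) ^ n := by
  rw [zpow_add_one₀ (by norm_num), mul_neg_one]

lemma neg_one_zpow_mul_self {R : Type*} [DivisionRing R] (n : ℤ) :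
    (-1 : R) ^ n * (-1 : R) ^ n = 1 := by
  rw [← zpow_add₀ (by norm_num), Even.neg_one_zpow ⟨n, rfl⟩]

section Telescope

variable {K A}

def kappaShift (κ : ∀ i n, A i n →ₗ[K] A (i + 1) n) (m : ℤ) (u : ∀ j, A j m) : ∀ j, A j m
  | 0 => 0
  | j + 1 => κ j m (u j)

/-- `telescopeSum κ m a j = a j + κ (a (j - 1)) + κ² (a (j - 2)) + ⋯ + κʲ (a 0)`. -/
def telescopeSum (κ : ∀ i n, A i n →ₗ[K] A (i + 1) n) (m : ℤ) (a : ∀ j, A j m) : ∀ j, A j m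
  | 0 => a 0
  | j + 1 => a (j + 1) + κ j m (telescopeSum κ m a j)

variable (δ : ∀ i n, A i n →ₗ[K] A i (n + 1)) (κ : ∀ i n, A i n →ₗ[K] A (i + 1) n)

lemma kappaShift_zero (m : ℤ) (j : ℕ) : kappaShift κ m (fun _ => 0) j = 0 := by
  cases j <;> simp [kappaShift]

lemma kappaShift_smul (m : ℤ) (c : K) (u : ∀ j, A j m) (j : ℕ) :
    kappaShift κ m (fun i => c • u i) j = c • kappaShift κ m u j := by
  cases j <;> simp [kappaShift]

lemma kappaShift_ite_lt (m : ℤ) (u : ∀ j, A j m) (W j : ℕ) :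
    kappaShift κ m (fun i => if i < W then u i else 0) j =
      if j ≤ W then kappaShift κ m u j else 0 := by
  cases j <;> simp [kappaShift, apply_ite (κ _ m)]

lemma telescopeSum_eq_add_kappaShift (m : ℤ) (a : ∀ j, A j m) (j : ℕ) :
    telescopeSum κ m a j = a j + kappaShift κ m (telescopeSum κ m a) j := by
  cases j <;> simp [telescopeSum, kappaShift]

lemma telescopeSum_zero (m : ℤ) (j : ℕ) : telescopeSum κ m (fun _ => 0) j = 0 := by
  induction j with
  | zero => rfl
  | succ j ih => simp [telescopeSum, ih]

lemma telescopeSum_eq_of_forall_lt_eq_zero (m : ℤ) (a : ∀ j, A j m) (W : ℕ)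
    (ha : ∀ j < W, a j = 0) : telescopeSum κ m a W = a W := by
  have hlt : ∀ j < W, telescopeSum κ m a j = 0 := by
    intro j
    induction j with
    | zero => intro h; simp [telescopeSum, ha 0 h]
    | succ j ih => intro h; simp [telescopeSum, ha (j + 1) h, ih (by omega)]
  rw [telescopeSum_eq_add_kappaShift]
  cases W with
  | zero => simp [kappaShift]
  | succ W => simp [kappaShift, hlt W (by omega)]

lemma telescopeMu1_apply (n : ℤ) (x : TelescopeCW A n) (j : ℕ) :
    telescopeMu1 K A δ κ n x j =
      ((-1 : K) ^ n • (δ j n (x j).1 + (x j).2) +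
          (-1 : K) ^ (n + 1) • kappaShift κ (n + 1) (fun i => (x i).2) j,
        (-1 : K) ^ (n + 1) • δ j (n + 1) (x j).2) := by
  induction x using DirectSum.induction_on with
  | zero => cases j <;> simp [kappaShift] <;> rfl
  | of i p =>
    simp only [telescopeMu1, ← lof_eq_of K, toModule_lof]
    rcases eq_or_ne j i with rfl | hji
    · cases j <;> simp [kappaShift, lof_apply_of_ne]
    rcases eq_or_ne j (i + 1) with rfl | hji'
    · simp [kappaShift, lof_apply_of_ne]
    obtain _ | j := j
    · simp [kappaShift, lof_apply_of_ne, hji]; rfl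
    · simp [kappaShift, lof_apply_of_ne, hji, show j ≠ i by omega]; rfl
  | add x y hx hy =>
    simp only [map_add, DirectSum.add_apply, hx, hy]
    cases j <;> simp [kappaShift, smul_add] <;> abel

def telescopeRetract (W : ℕ) (n : ℤ) (x : TelescopeCW A n) : TelescopeCW A n :=
  lof K ℕ _ W (telescopeSum κ n (fun i => (x i).1) W, 0)

def telescopeHomotopy (W : ℕ) (n : ℤ) (x : TelescopeCW A (n + 1)) : TelescopeCW A n :=
  DFinsupp.mk (Finset.range W) fun j =>
    ((0 : A j n), (-1 : K) ^ n • telescopeSum κ (n + 1) (fun i => (x i).1) j)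

lemma telescopeRetract_apply (W : ℕ) (n : ℤ) (x : TelescopeCW A n) (j : ℕ) :
    telescopeRetract κ W n x j =
      if j = W then (telescopeSum κ n (fun i => (x i).1) j, 0) else 0 := by
  rcases eq_or_ne j W with rfl | h
  · simp [telescopeRetract]
  · simp [telescopeRetract, lof_apply_of_ne, h]

lemma telescopeRetract_snd (W : ℕ) (n : ℤ) (x : TelescopeCW A n) (j : ℕ) :
    (telescopeRetract κ W n x j).2 = 0 := by
  by_cases h : j = W <;> simp [telescopeRetract_apply, h]

lemma telescopeHomotopy_apply (W : ℕ) (n : ℤ) (x : TelescopeCW A (n + 1)) (j : ℕ) :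
    telescopeHomotopy κ W n x j =
      if j < W then ((0 : A j n), (-1 : K) ^ n • telescopeSum κ (n + 1) (fun i => (x i).1) j)
      else 0 := by
  by_cases h : j < W <;> simp [telescopeHomotopy, DFinsupp.mk_apply, h]

lemma telescopeRetract_zero (W : ℕ) (n : ℤ) : telescopeRetract κ W n 0 = 0 := by
  ext1 j
  simp [telescopeRetract_apply, telescopeSum_zero]

lemma telescopeHomotopy_zero (W : ℕ) (n : ℤ) : telescopeHomotopy κ W n 0 = 0 := by
  ext1 j
  simp [telescopeHomotopy_apply, telescopeSum_zero]

lemma telescopeRetract_eq_self (W : ℕ) (n : ℤ) (c : TelescopeCW A n)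
    (hc : ∀ i, i ≠ W → c i = 0) (hcW : (c W).2 = 0) : telescopeRetract κ W n c = c := by
  ext1 j
  rcases eq_or_ne j W with rfl | h
  · rw [telescopeRetract_apply, if_pos rfl,
      telescopeSum_eq_of_forall_lt_eq_zero κ n _ j fun i hi => by simp [hc i hi.ne], ← hcW]
  · simp [telescopeRetract_apply, h, hc j h]

variable {δ κ}

lemma telescopeSum_fst_telescopeMu1
    (hκ : ∀ i n, (κ i (n + 1)).comp (δ i n) = (δ (i + 1) n).comp (κ i n))
    (n : ℤ) (x : TelescopeCW A n) (j : ℕ) :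
    telescopeSum κ (n + 1) (fun i => (telescopeMu1 K A δ κ n x i).1) j =
      (-1 : K) ^ n • (δ j n (telescopeSum κ n (fun i => (x i).1) j) + (x j).2) := by
  induction j with
  | zero => simp [telescopeSum, telescopeMu1_apply, kappaShift]
  | succ j ih =>
    have hκδ := LinearMap.congr_fun (hκ j n) (telescopeSum κ n (fun i => (x i).1) j)
    simp only [LinearMap.comp_apply] at hκδ
    rw [telescopeSum, ih, telescopeSum, telescopeMu1_apply]
    simp only [kappaShift, map_add, map_smul, smul_add, hκδ, neg_one_zpow_add_one, neg_smul]
    abel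

lemma telescopeMu1_telescopeRetract
    (hκ : ∀ i n, (κ i (n + 1)).comp (δ i n) = (δ (i + 1) n).comp (κ i n))
    (W : ℕ) (n : ℤ) (x : TelescopeCW A n) (hxW : (x W).2 = 0) :
    telescopeMu1 K A δ κ n (telescopeRetract κ W n x) =
      telescopeRetract κ W (n + 1) (telescopeMu1 K A δ κ n x) := by
  ext1 j
  simp only [telescopeMu1_apply, telescopeRetract_snd, kappaShift_zero]
  rcases eq_or_ne j W with rfl | h
  · simp [telescopeRetract_apply, telescopeSum_fst_telescopeMu1 hκ, hxW]
  · simp [telescopeRetract_apply, h]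

lemma telescopeRetract_add_homotopy_eq_self
    (hκ : ∀ i n, (κ i (n + 1)).comp (δ i n) = (δ (i + 1) n).comp (κ i n))
    (W : ℕ) (n : ℤ) (x : TelescopeCW A (n + 1)) (hx : ∀ i, W < i → x i = 0) (hxW : (x W).2 = 0) :
    telescopeRetract κ W (n + 1) x + telescopeMu1 K A δ κ n (telescopeHomotopy κ W n x) +
      telescopeHomotopy κ W (n + 1) (telescopeMu1 K A δ κ (n + 1) x) = x := by
  ext1 j
  simp only [DirectSum.add_apply, telescopeRetract_apply, telescopeHomotopy_apply,
    telescopeSum_fst_telescopeMu1 hκ]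
  simp only [telescopeMu1_apply, telescopeHomotopy_apply, apply_ite Prod.snd, apply_ite Prod.fst,
    Prod.snd_zero, Prod.fst_zero, kappaShift_ite_lt, kappaShift_smul]
  rcases lt_trichotomy j W with h | rfl | h
  · refine Prod.ext ?_ ?_
    · simp [h, h.ne, h.le, smul_smul, neg_one_zpow_add_one, neg_one_zpow_mul_self]
      rw [telescopeSum_eq_add_kappaShift κ _ _ j]
      abel
    · simp [h, h.ne, smul_smul, neg_one_zpow_add_one, neg_one_zpow_mul_self]
  · refine Prod.ext ?_ ?_
    · simp [smul_smul, neg_one_zpow_add_one, neg_one_zpow_mul_self]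
      rw [telescopeSum_eq_add_kappaShift κ _ _ j]
      abel
    · simp [hxW]
  · simp [h.ne', h.not_gt, h.not_ge, hx j h]

end Telescope

-- Summand `i` has weight `i + 1`, so `W = w - 1`; the two conjunctions describe `C_w` and `C_w^w`.
theorem telescope_Cww_inclusion_quasiIso
    (δ : ∀ i n, A i n →ₗ[K] A i (n + 1))
    (κ : ∀ i n, A i n →ₗ[K] A (i + 1) n)
    (hκ : ∀ i n, (κ i (n + 1)).comp (δ i n) = (δ (i + 1) n).comp (κ i n))
    (W : ℕ) :
    ∀ n : ℤ,
      -- surjectivity on cohomology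
      (∀ x : TelescopeCW A (n + 1),
        ((∀ i, W < i → x i = 0) ∧ (x W).2 = 0) →
        telescopeMu1 K A δ κ (n + 1) x = 0 →
        ∃ c : TelescopeCW A (n + 1),
          ((∀ i, i ≠ W → c i = 0) ∧ (c W).2 = 0) ∧
          telescopeMu1 K A δ κ (n + 1) c = 0 ∧
          ∃ y : TelescopeCW A n, ((∀ i, W < i → y i = 0) ∧ (y W).2 = 0) ∧
            x - c = telescopeMu1 K A δ κ n y) ∧
      -- injectivity on cohomology
      (∀ c : TelescopeCW A (n + 1),
        ((∀ i, i ≠ W → c i = 0) ∧ (c W).2 = 0) →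
        telescopeMu1 K A δ κ (n + 1) c = 0 →
        (∃ y : TelescopeCW A n, ((∀ i, W < i → y i = 0) ∧ (y W).2 = 0) ∧
          telescopeMu1 K A δ κ n y = c) →
        ∃ y : TelescopeCW A n, ((∀ i, i ≠ W → y i = 0) ∧ (y W).2 = 0) ∧
          telescopeMu1 K A δ κ n y = c) := by
  intro n
  refine ⟨fun x ⟨hx, hxW⟩ hμx => ?_, fun c ⟨hc, hcW⟩ _ ⟨y, ⟨_, hyW⟩, hyc⟩ => ?_⟩
  · have hxr : x = telescopeRetract κ W (n + 1) x +
        telescopeMu1 K A δ κ n (telescopeHomotopy κ W n x) := by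
      simpa [hμx, telescopeHomotopy_zero] using
        (telescopeRetract_add_homotopy_eq_self hκ W n x hx hxW).symm
    refine ⟨telescopeRetract κ W (n + 1) x, ⟨fun i hi => ?_, telescopeRetract_snd κ W _ x W⟩, ?_,
      telescopeHomotopy κ W n x, ⟨fun i hi => ?_, ?_⟩, sub_eq_of_eq_add' hxr⟩
    · simp [telescopeRetract_apply, hi]
    · rw [telescopeMu1_telescopeRetract hκ W _ x hxW, hμx, telescopeRetract_zero]
    · simp [telescopeHomotopy_apply, hi.not_gt]
    · simp [telescopeHomotopy_apply]
  · refine ⟨telescopeRetract κ W n y, ⟨fun i hi => ?_, telescopeRetract_snd κ W n y W⟩, ?_⟩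
    · simp [telescopeRetract_apply, hi]
    · rw [telescopeMu1_telescopeRetract hκ W n y hyW, hyc, telescopeRetract_eq_self κ W _ c hc hcW]
end

section
/- If X(u(z₀)) = 0 for some z₀ ∈ U, then u is constant on U, equal to u(z₀). (This is the ODE argument in the paper showing that a trivial solution du = X ⊗ γ whose image meets a stationary point of the vector field X must be constant.) -/
/-!
Along the segment `t ↦ z₁ + t • (z - z₁)` the map `u` solves the nonautonomous ODE
`f' = γ(z - z₁) • X(f)`, where `du = γ ⊗ X(u)`. Its coefficient is continuous on `[0, 1]`, hence
bounded, so the right-hand side is Lipschitz in `f` near `u z₁`. If `X (u z₁) = 0`, the constant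
`u z₁` is a second solution with the same initial value, and Lipschitz uniqueness makes `u`
constant near `z₁`. Therefore the set of points near which `u ≡ u z₀` is open, and by continuity
it is closed in `U`; connectedness of `U` finishes the proof.
-/

open Set Metric Filter Topology
open scoped NNReal

variable {E F : Type*} [NormedAddCommGroup E] [NormedSpace ℝ E]
  [NormedAddCommGroup F] [NormedSpace ℝ F]

theorem ODE_solution_const_of_apply_eq_zero {X : E → E} {K : ℝ≥0} {s : Set E}
    (hX : LipschitzOnWith K X s) {P : ℝ → ℝ} {f : ℝ → E} {a b : ℝ}
    (hP : ContinuousOn P (Icc a b)) (hf : ContinuousOn f (Icc a b))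
    (hf' : ∀ t ∈ Ico a b, HasDerivWithinAt f (P t • X (f t)) (Ici t) t)
    (hfs : ∀ t ∈ Ico a b, f t ∈ s) (hfa : f a ∈ s) (hXa : X (f a) = 0) :
    EqOn f (fun _ ↦ f a) (Icc a b) := by
  obtain ⟨C, hC⟩ := isCompact_Icc.exists_bound_of_continuousOn hP
  refine ODE_solution_unique_of_mem_Icc_right (v := fun t y ↦ P t • X y) (s := fun _ ↦ s)
    (K := C.toNNReal * K) (fun t ht ↦ ?_) hf hf' hfs continuousOn_const
    (fun t _ ↦ by simpa [hXa] using hasDerivWithinAt_const t (Ici t) (f a)) (fun _ _ ↦ hfa) rfl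
  have hPt : ‖P t‖₊ ≤ C.toNNReal :=
    NNReal.le_toNNReal_of_coe_le (hC t (Ico_subset_Icc_self ht))
  exact ((lipschitzWith_smul (P t)).comp_lipschitzOnWith hX).weaken (mul_le_mul_left hPt K)

theorem eventuallyEq_of_fderiv_eq_smulRight {X : E → E} (hX : LocallyLipschitz X)
    {U : Set F} (hU : IsOpen U) {u : F → E} (hu : DifferentiableOn ℝ u U)
    {γ : F → F →L[ℝ] ℝ} (hγ : ContinuousOn γ U)
    (hdu : ∀ z ∈ U, fderiv ℝ u z = (γ z).smulRight (X (u z)))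
    {z₁ : F} (hz₁ : z₁ ∈ U) (hzero : X (u z₁) = 0) :
    u =ᶠ[𝓝 z₁] fun _ ↦ u z₁ := by
  obtain ⟨K, s, hs, hXs⟩ := hX (u z₁)
  obtain ⟨r, hr, hball⟩ := Metric.mem_nhds_iff.1 <| inter_mem (hU.mem_nhds hz₁)
    (hu.continuousOn.continuousAt (hU.mem_nhds hz₁) hs)
  filter_upwards [ball_mem_nhds z₁ hr] with z hz
  set ℓ : ℝ → F := fun t ↦ z₁ + t • (z - z₁)
  have hℓ : ∀ t ∈ Icc (0 : ℝ) 1, ℓ t ∈ U ∩ u ⁻¹' s := fun t ht ↦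
    hball <| (convex_ball z₁ r).add_smul_sub_mem (mem_ball_self hr) hz ht
  have hderiv : ∀ t ∈ Icc (0 : ℝ) 1,
      HasDerivAt (u ∘ ℓ) (γ (ℓ t) (z - z₁) • X (u (ℓ t))) t := fun t ht ↦ by
    have hℓ' : HasDerivAt ℓ (z - z₁) t := by
      simpa only [id, one_smul] using ((hasDerivAt_id t).smul_const (z - z₁)).const_add z₁
    have := (hu.differentiableAt (hU.mem_nhds (hℓ t ht).1)).hasFDerivAt.comp_hasDerivAt t hℓ'
    rwa [hdu _ (hℓ t ht).1, ContinuousLinearMap.smulRight_apply] at this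
  have hconst := ODE_solution_const_of_apply_eq_zero hXs (f := u ∘ ℓ)
    ((hγ.comp (by fun_prop) fun t ht ↦ (hℓ t ht).1).clm_apply continuousOn_const)
    (hu.continuousOn.comp (by fun_prop) fun t ht ↦ (hℓ t ht).1)
    (fun t ht ↦ (hderiv t (Ico_subset_Icc_self ht)).hasDerivWithinAt)
    (fun t ht ↦ (hℓ t (Ico_subset_Icc_self ht)).2)
    (by simpa [ℓ] using mem_of_mem_nhds hs) (by simpa [ℓ] using hzero)
  simpa [ℓ] using hconst (right_mem_Icc.2 zero_le_one)

theorem eqOn_of_fderiv_eq_smulRight {X : E → E} (hX : LocallyLipschitz X)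
    {U : Set F} (hU : IsOpen U) (hUc : IsPreconnected U) {u : F → E}
    (hu : DifferentiableOn ℝ u U) {γ : F → F →L[ℝ] ℝ} (hγ : ContinuousOn γ U)
    (hdu : ∀ z ∈ U, fderiv ℝ u z = (γ z).smulRight (X (u z)))
    {z₀ : F} (hz₀ : z₀ ∈ U) (hzero : X (u z₀) = 0) :
    EqOn u (fun _ ↦ u z₀) U := by
  set V := {z | u =ᶠ[𝓝 z] fun _ ↦ u z₀}
  have hV : U ⊆ V := by
    refine hUc.subset_of_closure_inter_subset isOpen_setOfPred_eventually_nhds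
      ⟨z₀, hz₀, eventuallyEq_of_fderiv_eq_smulRight hX hU hu hγ hdu hz₀ hzero⟩ ?_
    rintro z ⟨hzV, hz⟩
    have huz : u z = u z₀ := by
      have := mem_closure_image (hu.continuousOn.continuousAt (hU.mem_nhds hz)) hzV
      exact closure_minimal (image_subset_iff.2 fun w hw ↦ hw.self_of_nhds) isClosed_singleton this
    simpa [V, huz] using
      eventuallyEq_of_fderiv_eq_smulRight hX hU hu hγ hdu hz (huz ▸ hzero)
  exact fun z hz ↦ (hV hz).self_of_nhds

theorem ContinuousLinearMap.eq_smulRight_of_apply_eq_smul {L : ℝ × ℝ →L[ℝ] E} {a b : ℝ} {x : E}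
    (h₁ : L (1, 0) = a • x) (h₂ : L (0, 1) = b • x) :
    L = (a • ContinuousLinearMap.fst ℝ ℝ ℝ + b • ContinuousLinearMap.snd ℝ ℝ ℝ).smulRight x := by
  ext <;> simp [h₁, h₂]

theorem trivial_solution_through_zero_is_constant_general
    (m : ℕ)
    (X : (Fin m → ℝ) → (Fin m → ℝ)) (hX : LocallyLipschitz X)
    (U : Set (ℝ × ℝ)) (hU : IsOpen U) (hUc : IsPreconnected U)
    (p q : ℝ × ℝ → ℝ) (u : ℝ × ℝ → (Fin m → ℝ))
    (hp : ContinuousOn p U) (hq : ContinuousOn q U)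
    (hu : ContDiffOn ℝ 1 u U)
    (hs : ∀ z ∈ U, fderiv ℝ u z (1, 0) = p z • X (u z))
    (ht : ∀ z ∈ U, fderiv ℝ u z (0, 1) = q z • X (u z))
    (z₀ : ℝ × ℝ) (hz₀ : z₀ ∈ U) (hzero : X (u z₀) = 0) :
    ∀ z ∈ U, u z = u z₀ :=
  eqOn_of_fderiv_eq_smulRight hX hU hUc (hu.differentiableOn one_ne_zero)
    (γ := fun z ↦ p z • ContinuousLinearMap.fst ℝ ℝ ℝ + q z • ContinuousLinearMap.snd ℝ ℝ ℝ)
    ((hp.smul continuousOn_const).add (hq.smul continuousOn_const))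
    (fun z hz ↦ ContinuousLinearMap.eq_smulRight_of_apply_eq_smul (hs z hz) (ht z hz)) hz₀ hzero

theorem trivial_solution_through_zero_is_constant
    (m : ℕ) (hm : 1 ≤ m)
    (X : (Fin m → ℝ) → (Fin m → ℝ)) (hX : LocallyLipschitz X)
    (U : Set (ℝ × ℝ)) (hU : IsOpen U) (hUc : IsPreconnected U)
    (p q : ℝ × ℝ → ℝ) (u : ℝ × ℝ → (Fin m → ℝ))
    (hp : ContinuousOn p U) (hq : ContinuousOn q U)
    (hu : ContDiffOn ℝ 1 u U)
    (hs : ∀ z ∈ U, fderiv ℝ u z (1, 0) = p z • X (u z))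
    (ht : ∀ z ∈ U, fderiv ℝ u z (0, 1) = q z • X (u z))
    (z₀ : ℝ × ℝ) (hz₀ : z₀ ∈ U) (hzero : X (u z₀) = 0) :
    ∀ z ∈ U, u z = u z₀ :=
  trivial_solution_through_zero_is_constant_general m X hX U hU hUc p q u hp hq hu hs ht z₀ hz₀
    hzero
end

section
/- For every C > 0 there exists D > 0 such that for every l ≥ 0, every s ∈ [0,l] and every t ∈ [0,1]: |f(−e^{−π(s+it)}, −e^{−π(l−s−it)})| ≤ D · max( e^{−C s}, e^{−C(l−s)} ). In other words, the restriction of f to the neck of gluing parameter l decays faster than any exponential rate, uniformly in l, when measured from the nearer end of the finite strip [0,l] × [0,1]. (This is the paper's superexponential decay estimate on the necks of glued surfaces, for a function on the compactified universal family which vanishes to infinite order at a singular point; the neck coordinates are δ₋ = −e^{−π(s+it)} and δ₊ = −e^{−π(l−s−it)}.) -/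
/-!
Smoothness and flatness at the origin give `f z = o(‖z‖ ^ n)` for every `n`, by induction on `n`:
the derivative of a flat function is flat, and the mean value theorem gains one power of `‖z‖`.
Boundedness of `f` on the compact bidisc upgrades this to `‖f z‖ ≤ D ‖z‖ ^ n` on all of `P`.
At the neck point `‖(δ₋, δ₊)‖ = max (e^{-π s}) (e^{-π (l - s)})`, so any `n ≥ C / π` works.
-/

open Filter Topology Asymptotics Complex Real

universe u

/-- Both types live in one universe because the induction passes from `g` to `fderiv ℝ g`. -/
theorem ContDiffAt.isLittleO_pow_of_iteratedFDeriv_eq_zero {E F : Type u}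
    [NormedAddCommGroup E] [NormedSpace ℝ E] [NormedAddCommGroup F] [NormedSpace ℝ F]
    {g : E → F} {a : E} {n : ℕ}
    (hg : ContDiffAt ℝ n g a) (hvanish : ∀ k ≤ n, iteratedFDeriv ℝ k g a = 0) :
    g =o[𝓝 a] fun x => ‖x - a‖ ^ n := by
  have hga : g a = 0 := by simpa using congrArg (· ![]) (hvanish 0 n.zero_le)
  induction n generalizing F g with
  | zero => simpa [isLittleO_one_iff, hga] using hg.continuousAt.tendsto
  | succ n ih =>
    have hderiv : fderiv ℝ g =o[𝓝 a] fun x => ‖x - a‖ ^ n := by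
      refine ih (hg.fderiv_right (m := n) (by push_cast; rfl)) (fun k hk => ?_) ?_ <;>
        rw [← norm_eq_zero]
      · rw [norm_iteratedFDeriv_fderiv, hvanish (k + 1) (by omega), norm_zero]
      · rw [← norm_iteratedFDeriv_zero (𝕜 := ℝ), norm_iteratedFDeriv_fderiv,
          hvanish 1 (by omega), norm_zero]
    obtain ⟨ε, hε, hdiff⟩ := Metric.eventually_nhds_iff_ball.1
      ((hg.eventually (by simp)).mono fun y hy => hy.differentiableAt (by simp))
    have hball : 𝓝[Metric.ball a ε] a = 𝓝 a := nhdsWithin_eq_nhds.2 (Metric.ball_mem_nhds a hε)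
    have hmvt := (convex_ball a ε).isLittleO_pow_succ (Metric.mem_ball_self hε)
      (fun y hy => (hdiff y hy).hasFDerivAt.hasFDerivWithinAt) (by rwa [hball])
    simpa [hball, hga] using hmvt

theorem Asymptotics.IsBigO.exists_pos_forall_norm_le_mul_norm_pow {E F : Type*}
    [SeminormedAddCommGroup E] [SeminormedAddCommGroup F] {f : E → F} {S : Set E} {M : ℝ}
    {n : ℕ} (hf : f =O[𝓝 0] fun x => ‖x‖ ^ n) (hM : ∀ x ∈ S, ‖f x‖ ≤ M) :
    ∃ D > 0, ∀ x ∈ S, ‖f x‖ ≤ D * ‖x‖ ^ n := by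
  obtain ⟨c, hc, hcf⟩ := hf.exists_pos
  obtain ⟨ε, hε, hnear⟩ := Metric.eventually_nhds_iff.1 hcf.bound
  refine ⟨max c (M / ε ^ n), lt_max_of_lt_left hc, fun x hx => ?_⟩
  rcases lt_or_ge ‖x‖ ε with hsmall | hlarge
  · calc ‖f x‖ ≤ c * ‖x‖ ^ n := by simpa using hnear (by simpa using hsmall)
      _ ≤ max c (M / ε ^ n) * ‖x‖ ^ n := by gcongr; exact le_max_left _ _
  · have hM0 : 0 ≤ M := (norm_nonneg _).trans (hM x hx)
    calc ‖f x‖ ≤ M := hM x hx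
      _ = M / ε ^ n * ε ^ n := by field_simp
      _ ≤ M / ε ^ n * ‖x‖ ^ n := by gcongr
      _ ≤ max c (M / ε ^ n) * ‖x‖ ^ n := by gcongr; exact le_max_right _ _

/-- The point `(δ₋, δ₊)` of the neck of gluing parameter `l` at `s + it`. -/
noncomputable def neckPoint (l s t : ℝ) : ℂ × ℂ :=
  (-exp (-(π : ℂ) * (s + t * I)), -exp (-(π : ℂ) * (l - s - t * I)))

section Neck

variable {l s t : ℝ}

theorem norm_neckPoint_fst : ‖(neckPoint l s t).1‖ = Real.exp (-π * s) := by
  simp [neckPoint, norm_exp]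

theorem norm_neckPoint_snd : ‖(neckPoint l s t).2‖ = Real.exp (-π * (l - s)) := by
  simp [neckPoint, norm_exp]

theorem neckPoint_mem_closedBall_prod (hs : s ∈ Set.Icc 0 l) :
    neckPoint l s t ∈ Metric.closedBall 0 1 ×ˢ Metric.closedBall 0 1 := by
  simp only [Set.mem_prod, mem_closedBall_zero_iff, norm_neckPoint_fst, norm_neckPoint_snd,
    Real.exp_le_one_iff]
  constructor <;> nlinarith [hs.1, hs.2, pi_pos]

theorem norm_neckPoint_pow_le {C : ℝ} {n : ℕ} (hC : C ≤ π * n) (hs : s ∈ Set.Icc 0 l) :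
    ‖neckPoint l s t‖ ^ n ≤ max (Real.exp (-C * s)) (Real.exp (-C * (l - s))) := by
  have hdecay : ∀ u ≥ (0 : ℝ), Real.exp (-π * u) ^ n ≤ Real.exp (-C * u) := fun u hu => by
    rw [← Real.exp_nat_mul]
    exact Real.exp_le_exp.2 (by nlinarith)
  rw [Prod.norm_def, norm_neckPoint_fst, norm_neckPoint_snd]
  rcases max_choice (Real.exp (-π * s)) (Real.exp (-π * (l - s))) with h | h <;> rw [h]
  · exact le_max_of_le_left (hdecay s hs.1)
  · exact le_max_of_le_right (hdecay (l - s) (sub_nonneg.2 hs.2))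

end Neck

theorem superexponential_decay_on_neck
    (f : ℂ × ℂ → ℂ)
    (hcont : ContinuousOn f (Metric.closedBall 0 1 ×ˢ Metric.closedBall 0 1))
    (hsmooth : ∃ V ∈ nhds ((0, 0) : ℂ × ℂ), ContDiffOn ℝ (⊤ : ℕ∞) f V)
    (hvanish : ∀ k : ℕ, iteratedFDeriv ℝ k f (0, 0) = 0) :
    ∀ C : ℝ, 0 < C → ∃ D : ℝ, 0 < D ∧
      ∀ l : ℝ, 0 ≤ l → ∀ s ∈ Set.Icc (0 : ℝ) l, ∀ t ∈ Set.Icc (0 : ℝ) 1,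
        norm
            (f (-Complex.exp (-(Real.pi : ℂ) * ((s : ℂ) + (t : ℂ) * Complex.I)),
                -Complex.exp (-(Real.pi : ℂ) * ((l : ℂ) - (s : ℂ) - (t : ℂ) * Complex.I)))) ≤
          D * max (Real.exp (-C * s)) (Real.exp (-C * (l - s))) := by
  intro C _
  obtain ⟨n, hn⟩ : ∃ n : ℕ, C ≤ π * n := by
    obtain ⟨n, hn⟩ := exists_nat_ge (C / π)
    exact ⟨n, by rwa [div_le_iff₀' pi_pos] at hn⟩
  obtain ⟨V, hV, hfV⟩ := hsmooth
  rw [Prod.mk_zero_zero] at hV hvanish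
  have hflat : f =O[𝓝 0] fun x => ‖x‖ ^ n := by
    simpa using ((hfV.contDiffAt hV).of_le (by exact_mod_cast le_top)
      |>.isLittleO_pow_of_iteratedFDeriv_eq_zero (n := n) fun k _ => hvanish k).isBigO
  obtain ⟨M, hM⟩ := ((isCompact_closedBall (0 : ℂ) 1).prod
    (isCompact_closedBall (0 : ℂ) 1)).exists_bound_of_continuousOn hcont
  obtain ⟨D, hD, hfD⟩ := hflat.exists_pos_forall_norm_le_mul_norm_pow hM
  refine ⟨D, hD, fun l _ s hs t _ => ?_⟩
  calc ‖f (neckPoint l s t)‖ ≤ D * ‖neckPoint l s t‖ ^ n :=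
        hfD _ (neckPoint_mem_closedBall_prod hs)
    _ ≤ D * max (Real.exp (-C * s)) (Real.exp (-C * (l - s))) := by
        gcongr; exact norm_neckPoint_pow_le hn hs
end
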